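/- Fix x ∈ X and suppose f(y) > 0 and π(y) > 0 for all y ∈ Y, where Y is a nonempty finite set, f : Y → ℝ are the class-conditional density values at x, and π : Y → ℝ are the class-priors. If the logits Φ : Y → ℝ satisfy, for every y ∈ Y, exp(Φ(y) + log π(y)) / Σ_{y' ∈ Y} exp(Φ(y') + log π(y')) = π(y)·f(y) / Σ_{y' ∈ Y} π(y')·f(y') (i.e., the logit-adjusted softmax matches the posterior), then there exists c > 0 such that exp(Φ(y)) = c · f(y) for every y ∈ Y; in particular, {y : Φ(y) = max_{y'} Φ(y')} = {y : f(y) = max_{y'} f(y')}, so the learned logits recover the class-conditionals up to a constant factor. -/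

import Mathlib

/-!
Since `exp (Φ y + log π y) = π y * exp (Φ y)`, the prior cancels from both sides of the matching
condition, leaving `exp (Φ y)` proportional to `f y` with the ratio of the two normalizers as
constant. Argmax sets are invariant under strictly monotone maps, and both `exp` and
multiplication by a positive constant are strictly monotone.
-/

open Finset

theorem StrictMono.map_ciSup_of_finite {ι α β : Type*} [Finite ι] [Nonempty ι]
    [ConditionallyCompleteLinearOrder α] [ConditionallyCompleteLattice β]
    {g : α → β} (hg : StrictMono g) (u : ι → α) :
    g (⨆ i, u i) = ⨆ i, g (u i) := by
  obtain ⟨i₀, hi₀⟩ := exists_eq_ciSup_of_finite (f := u)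
  refine le_antisymm ?_ (ciSup_le fun i => hg.monotone (le_ciSup (Finite.bddAbove_range u) i))
  rw [← hi₀]
  exact le_ciSup (Finite.bddAbove_range fun i => g (u i)) i₀

theorem StrictMono.setOf_eq_ciSup_comp {ι α β : Type*} [Finite ι] [Nonempty ι]
    [ConditionallyCompleteLinearOrder α] [ConditionallyCompleteLattice β]
    {g : α → β} (hg : StrictMono g) (u : ι → α) :
    {i | g (u i) = ⨆ j, g (u j)} = {i | u i = ⨆ j, u j} := by
  ext i
  simp only [Set.mem_ofPred_eq, ← hg.map_ciSup_of_finite, hg.injective.eq_iff]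

theorem exists_pos_exp_eq_mul_of_adjusted_softmax_eq {Y : Type*} [Fintype Y] [Nonempty Y]
    (Φ π f : Y → ℝ) (hπ : ∀ y, 0 < π y) (hf : ∀ y, 0 < f y)
    (hmatch : ∀ y, Real.exp (Φ y + Real.log (π y)) /
        (∑ y', Real.exp (Φ y' + Real.log (π y'))) =
      π y * f y / ∑ y', π y' * f y') :
    ∃ c : ℝ, 0 < c ∧ ∀ y, Real.exp (Φ y) = c * f y := by
  set S := ∑ y', Real.exp (Φ y' + Real.log (π y'))
  set T := ∑ y', π y' * f y'
  have hS : 0 < S := sum_pos (fun y _ => Real.exp_pos _) univ_nonempty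
  have hT : 0 < T := sum_pos (fun y _ => mul_pos (hπ y) (hf y)) univ_nonempty
  refine ⟨S / T, div_pos hS hT, fun y => ?_⟩
  have h := hmatch y
  rw [Real.exp_add, Real.exp_log (hπ y), div_eq_div_iff hS.ne' hT.ne'] at h
  have h' : Real.exp (Φ y) * T = S * f y :=
    mul_left_cancel₀ (hπ y).ne' (by linear_combination h)
  rw [div_mul_eq_mul_div, eq_div_iff hT.ne', h']

/-- If the logit-adjusted softmax matches the posterior `π(y)·f(y) / Σ π(y')·f(y')`,
then the exponentiated logits recover the class-conditionals up to a positive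
constant factor; in particular the logit maximizers coincide with the
class-conditional maximizers. -/
theorem stmt11 {Y : Type*} [Fintype Y] [Nonempty Y]
    (Φ π f : Y → ℝ) (hπ : ∀ y, 0 < π y) (hf : ∀ y, 0 < f y)
    (hmatch : ∀ y, Real.exp (Φ y + Real.log (π y)) /
        (∑ y', Real.exp (Φ y' + Real.log (π y'))) =
      π y * f y / ∑ y', π y' * f y') :
    (∃ c : ℝ, 0 < c ∧ ∀ y, Real.exp (Φ y) = c * f y) ∧
      {y : Y | Φ y = ⨆ y', Φ y'} = {y : Y | f y = ⨆ y', f y'} := by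
  obtain ⟨c, hc, hexp⟩ := exists_pos_exp_eq_mul_of_adjusted_softmax_eq Φ π f hπ hf hmatch
  refine ⟨⟨c, hc, hexp⟩, ?_⟩
  rw [← Real.exp_strictMono.setOf_eq_ciSup_comp Φ,
    ← (strictMono_mul_left_of_pos hc).setOf_eq_ciSup_comp f]
  simp only [hexp]
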